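/- Let μ^1,...,μ^K : {1,...,T} → [0,1] be sequences of mean rewards and let V_j = Σ_{t=1}^{T-1} max_k |μ_{t+1}^k − μ_t^k| (where indices range over a contiguous interval I of length at most Δ, with μ extended constantly past its end). Let k_0 be an arm maximizing Σ_{t∈I} μ_t^k over k. Then Σ_{t∈I} (max_k μ_t^k − μ_t^{k_0}) ≤ 2·V_j·Δ. -/

import Mathlib

/-!
If the best static arm `k₀` lost more than `2 V` to the leader `k₁` at some epoch `t₀` of the
interval, then, since no arm drifts by more than `V` inside the interval, `k₁` would beat `k₀`
at every epoch of the interval, contradicting the optimality of `k₀` for the interval sum.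
-/

open Finset

theorem sub_le_two_mul_of_sum_le {α : Type*} {s : Finset α} (hs : s.Nonempty) {f g : α → ℝ}
    {V : ℝ} (t₀ : α) (hf : ∀ t ∈ s, |f t - f t₀| ≤ V) (hg : ∀ t ∈ s, |g t - g t₀| ≤ V)
    (hfg : ∑ t ∈ s, f t ≤ ∑ t ∈ s, g t) : f t₀ - g t₀ ≤ 2 * V := by
  obtain ⟨t, ht, hle⟩ := exists_le_of_sum_le hs hfg
  have hft := (abs_le.mp (hf t ht)).1
  have hgt := (abs_le.mp (hg t ht)).2
  linarith

section SupNormVariation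

variable {ι : Type*} [Fintype ι] [Nonempty ι]

noncomputable def supNormVariation (μ : ℕ → ι → ℝ) (a b : ℕ) : ℝ :=
  ∑ t ∈ Ico a b, univ.sup' univ_nonempty fun k => |μ (t + 1) k - μ t k|

theorem abs_sub_le_sup'_abs_sub (μ : ℕ → ι → ℝ) (t : ℕ) (k : ι) :
    |μ (t + 1) k - μ t k| ≤ univ.sup' univ_nonempty fun k => |μ (t + 1) k - μ t k| :=
  le_sup' (fun k => |μ (t + 1) k - μ t k|) (mem_univ k)

theorem supNormVariation_nonneg (μ : ℕ → ι → ℝ) (a b : ℕ) : 0 ≤ supNormVariation μ a b :=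
  sum_nonneg fun t _ => (abs_nonneg _).trans (abs_sub_le_sup'_abs_sub μ t (Classical.arbitrary ι))

theorem abs_sub_le_supNormVariation_of_le (μ : ℕ → ι → ℝ) (k : ι) {a b s t : ℕ}
    (has : a ≤ s) (hst : s ≤ t) (htb : t ≤ b) : |μ t k - μ s k| ≤ supNormVariation μ a b :=
  calc |μ t k - μ s k| = dist (μ s k) (μ t k) := by rw [Real.dist_eq, abs_sub_comm]
    _ ≤ ∑ u ∈ Ico s t, dist (μ u k) (μ (u + 1) k) := dist_le_Ico_sum_dist (μ · k) hst
    _ ≤ ∑ u ∈ Ico s t, univ.sup' univ_nonempty fun k => |μ (u + 1) k - μ u k| :=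
        sum_le_sum fun u _ => by
          rw [Real.dist_eq, abs_sub_comm]; exact abs_sub_le_sup'_abs_sub μ u k
    _ ≤ supNormVariation μ a b :=
        sum_le_sum_of_subset_of_nonneg (Ico_subset_Ico has htb) fun u _ _ =>
          (abs_nonneg _).trans (abs_sub_le_sup'_abs_sub μ u k)

theorem abs_sub_le_supNormVariation (μ : ℕ → ι → ℝ) (k : ι) {a b s t : ℕ}
    (hs : s ∈ Icc a b) (ht : t ∈ Icc a b) : |μ t k - μ s k| ≤ supNormVariation μ a b := by
  rw [mem_Icc] at hs ht
  rcases le_total s t with hst | hts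
  · exact abs_sub_le_supNormVariation_of_le μ k hs.1 hst ht.2
  · rw [abs_sub_comm]
    exact abs_sub_le_supNormVariation_of_le μ k ht.1 hts hs.2

theorem sup'_sub_le_two_mul_supNormVariation (μ : ℕ → ι → ℝ) {a b t₀ : ℕ} (ht₀ : t₀ ∈ Icc a b)
    {k₀ : ι} (hk₀ : ∀ k, ∑ t ∈ Icc a b, μ t k ≤ ∑ t ∈ Icc a b, μ t k₀) :
    (univ.sup' univ_nonempty fun k => μ t₀ k) - μ t₀ k₀ ≤ 2 * supNormVariation μ a b := by
  obtain ⟨k₁, -, hk₁⟩ := exists_mem_eq_sup' univ_nonempty fun k => μ t₀ k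
  rw [hk₁]
  exact sub_le_two_mul_of_sum_le (f := (μ · k₁)) (g := (μ · k₀)) ⟨t₀, ht₀⟩ t₀
    (fun t ht => abs_sub_le_supNormVariation μ k₁ ht₀ ht)
    (fun t ht => abs_sub_le_supNormVariation μ k₀ ht₀ ht) (hk₀ k₁)

end SupNormVariation

theorem stmt_3_general (K Δ a b : ℕ) [NeZero K] (hlen : b + 1 - a ≤ Δ)
    (μ : ℕ → Fin K → ℝ)
    (k0 : Fin K)
    (hk0 : ∀ k, ∑ t ∈ Finset.Icc a b, μ t k ≤ ∑ t ∈ Finset.Icc a b, μ t k0) :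
    ∑ t ∈ Finset.Icc a b,
        ((Finset.univ.sup' Finset.univ_nonempty fun k => μ t k) - μ t k0)
      ≤ 2 * (∑ t ∈ Finset.Ico a b,
          Finset.univ.sup' Finset.univ_nonempty fun k => |μ (t+1) k - μ t k|) * Δ := by
  have hV := supNormVariation_nonneg μ a b
  have hcard : ((Icc a b).card : ℝ) ≤ Δ := by exact_mod_cast (Nat.card_Icc a b).trans_le hlen
  calc ∑ t ∈ Icc a b, ((univ.sup' univ_nonempty fun k => μ t k) - μ t k0)
      ≤ (Icc a b).card • (2 * supNormVariation μ a b) :=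
        sum_le_card_nsmul _ _ _ fun t ht => sup'_sub_le_two_mul_supNormVariation μ ht hk0
    _ ≤ 2 * supNormVariation μ a b * Δ := by
        rw [nsmul_eq_mul, mul_comm]
        exact mul_le_mul_of_nonneg_left hcard (by positivity)

/-- Over a contiguous interval `I = [a,b]` of at most `Δ` epochs, the cumulative
loss of the best static arm `k0` relative to the dynamic oracle is at most
`2·V_j·Δ`, where `V_j` is the total sup-norm variation of the mean rewards
within the interval (the term past the end of the interval vanishes since `μ`
is extended constantly). -/
theorem stmt_3 (K Δ a b : ℕ) [NeZero K] (hab : a ≤ b) (hlen : b + 1 - a ≤ Δ)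
    (μ : ℕ → Fin K → ℝ) (hμ : ∀ t k, μ t k ∈ Set.Icc (0:ℝ) 1)
    (k0 : Fin K)
    (hk0 : ∀ k, ∑ t ∈ Finset.Icc a b, μ t k ≤ ∑ t ∈ Finset.Icc a b, μ t k0) :
    ∑ t ∈ Finset.Icc a b,
        ((Finset.univ.sup' Finset.univ_nonempty fun k => μ t k) - μ t k0)
      ≤ 2 * (∑ t ∈ Finset.Ico a b,
          Finset.univ.sup' Finset.univ_nonempty fun k => |μ (t+1) k - μ t k|) * Δ :=
  stmt_3_general K Δ a b hlen μ k0 hk0
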